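/- Let r > 0 and D_r(w) = (√(2r√π)/(2πr²))·exp(−‖w‖₂²/(2r²)). Define the averaged project-then-backproject kernel K : ℝ² → ℝ by K(w) = (1/(2π))·∫₀^{2π} ( ∫_{ℝ²} D_r(w − v)·L_θ[D_r](⟨u_θ^⊥, v⟩) dv ) dθ, where the inner integral is D_r convolved with the back projection of the line projection of D_r at angle θ. Then K has the inverse Fourier representation: for every w ∈ ℝ², K(w) = ∫_{ℝ²} e^{2πi⟨ξ,w⟩} · (2r/(√π·‖ξ‖₂))·exp(−4π²r²‖ξ‖₂²) dξ; in particular the Fourier multiplier of K is (2r/(√π·‖ξ‖₂))·exp(−4π²r²‖ξ‖₂²). -/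

import Mathlib

noncomputable section
open MeasureTheory

/-- Probe direction `u_θ = (cos θ, sin θ)`. -/
def uvec (θ : ℝ) : ℝ × ℝ := (Real.cos θ, Real.sin θ)

/-- Sweep direction `u_θ^⊥ = (sin θ, -cos θ)`. -/
def uperp (θ : ℝ) : ℝ × ℝ := (Real.sin θ, -Real.cos θ)

/-- Euclidean inner product on ℝ². -/
def dot2 (a b : ℝ × ℝ) : ℝ := a.1 * b.1 + a.2 * b.2

/-- Euclidean norm on ℝ². -/
def norm2 (a : ℝ × ℝ) : ℝ := Real.sqrt (a.1 ^ 2 + a.2 ^ 2)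

/-- Line projection at angle θ: `L_θ[Y](t) = ∫ Y(s·u_θ + t·u_θ^⊥) ds`. -/
def lineProj (Y : ℝ × ℝ → ℝ) (θ t : ℝ) : ℝ := ∫ s : ℝ, Y (s • uvec θ + t • uperp θ)
/-- Normalized two-dimensional Gaussian of width `r`, whose line projections have unit
`L²(ℝ)` norm. -/
def gauss (r : ℝ) (w : ℝ × ℝ) : ℝ :=
  (Real.sqrt (2 * r * Real.sqrt Real.pi) / (2 * Real.pi * r ^ 2)) *
    Real.exp (-(norm2 w) ^ 2 / (2 * r ^ 2))

/-- The averaged project-then-backproject kernel `K` for the Gaussian of width `r`: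
`K(w) = (1/2π) ∫₀^{2π} (D_r ∗ backproject(L_θ[D_r]))(w) dθ`. -/
def avgKernel (r : ℝ) (w : ℝ × ℝ) : ℝ :=
  (1 / (2 * Real.pi)) * ∫ θ in (0 : ℝ)..(2 * Real.pi),
    ∫ v : ℝ × ℝ, gauss r (w - v) * lineProj (gauss r) θ (dot2 (uperp θ) v)

/-!
Both sides reduce to the angular average `(1/2π) ∫_{-π}^{π} exp(-⟨u_θ, w⟩² / 4r²) dθ`.

Kernel side: in the orthonormal frame `(u_θ, u_θ^⊥)` the integrand factorises into
one-dimensional Gaussians, and the normalisation of `D_r` (its line projections have unit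
`L²` norm) makes the inner integral exactly `exp(-⟨u_θ^⊥, w⟩² / 4r²)`; since `u_θ^⊥ = u_{θ-π/2}`,
periodicity turns the average over `[0, 2π]` into the one above.

Fourier side: in polar coordinates the Jacobian cancels the singularity `1/‖ξ‖`. Pairing the
rays at angles `θ` and `θ + π` (where `u_{θ+π} = -u_θ`) glues the two half-line integrals into
the one-dimensional inverse Fourier transform of the even Gaussian
`σ ↦ (2r/√π) exp(-4π²r²σ²)`, evaluated at `⟨u_θ, w⟩`; that transform is `exp(-t²/4r²) / π`.
-/

open Real FourierTransform Set

lemma LinearEquiv.measurePreserving_of_abs_det_eq_one {E : Type*} [NormedAddCommGroup E]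
    [NormedSpace ℝ E] [MeasurableSpace E] [BorelSpace E] [FiniteDimensional ℝ E]
    (μ : Measure E) [μ.IsAddHaarMeasure] (f : E ≃ₗ[ℝ] E)
    (hf : |LinearMap.det (f : E →ₗ[ℝ] E)| = 1) : MeasurePreserving f μ μ := by
  refine ⟨f.toContinuousLinearEquiv.continuous.measurable, ?_⟩
  rw [show (f : E → E) = (f : E →ₗ[ℝ] E) from rfl,
    Measure.map_linearMap_addHaar_eq_smul_addHaar μ (by rw [← abs_ne_zero, hf]; exact one_ne_zero),
    abs_inv, hf, inv_one, ENNReal.ofReal_one, one_smul]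

lemma MeasureTheory.Integrable.circle_smul {α : Type*} [MeasurableSpace α] {μ : Measure α}
    {E : Type*} [NormedAddCommGroup E] [NormedSpace ℂ E] {f : α → E} (hf : Integrable f μ)
    {c : α → Circle} (hc : AEStronglyMeasurable c μ) :
    Integrable (fun a => c a • f a) μ :=
  hf.norm.mono' (hc.smul hf.aestronglyMeasurable) (ae_of_all _ fun a => by rw [Circle.norm_smul])

lemma fourierInv_const_mul (c : ℂ) (f : ℝ → ℂ) (t : ℝ) :
    𝓕⁻ (fun x => c * f x) t = c * 𝓕⁻ f t := by
  rw [Real.fourierInv_eq, Real.fourierInv_eq]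
  simp_rw [Circle.smul_def, smul_eq_mul, mul_left_comm _ c]
  exact integral_const_mul c _

lemma norm2_sq (a : ℝ × ℝ) : norm2 a ^ 2 = a.1 ^ 2 + a.2 ^ 2 :=
  sq_sqrt (by positivity)

lemma uperp_eq_uvec_sub (θ : ℝ) : uperp θ = uvec (θ - π / 2) := by
  simp [uperp, uvec, cos_sub_pi_div_two, sin_sub_pi_div_two]

lemma uvec_add_pi (θ : ℝ) : uvec (θ + π) = -uvec θ := by
  simp [uvec, cos_add_pi, sin_add_pi]

lemma uvec_periodic : Function.Periodic uvec (2 * π) := fun θ => by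
  simp [uvec, cos_add_two_pi, sin_add_two_pi]

lemma dot2_neg_left (a b : ℝ × ℝ) : dot2 (-a) b = -dot2 a b := by
  simp only [dot2, Prod.fst_neg, Prod.snd_neg]; ring

lemma polarCoord_symm_eq_smul_uvec (p : ℝ × ℝ) : polarCoord.symm p = p.1 • uvec p.2 := by
  simp [polarCoord_symm_apply, uvec]

lemma norm2_smul_uvec (c θ : ℝ) : norm2 (c • uvec θ) = |c| := by
  rw [norm2, ← sqrt_sq_eq_abs]
  congr 1
  simp only [uvec, Prod.smul_mk, smul_eq_mul]
  linear_combination c ^ 2 * sin_sq_add_cos_sq θ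

lemma dot2_smul_uvec (c θ : ℝ) (w : ℝ × ℝ) : dot2 (c • uvec θ) w = dot2 (uvec θ) w * c := by
  simp only [dot2, uvec, Prod.smul_mk, smul_eq_mul]; ring

section Frame

-- The coordinate map of the frame `(u_θ, u_θ^⊥)` is a reflection, hence its own inverse.
def frame (θ : ℝ) : (ℝ × ℝ) ≃ₗ[ℝ] ℝ × ℝ :=
  LinearEquiv.ofInvolutive
    ((LinearMap.fst ℝ ℝ ℝ).smulRight (uvec θ) + (LinearMap.snd ℝ ℝ ℝ).smulRight (uperp θ))
    fun p => by
      ext <;> simp only [uvec, uperp, LinearMap.add_apply, LinearMap.coe_smulRight,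
        LinearMap.fst_apply, LinearMap.snd_apply, Prod.smul_mk, Prod.mk_add_mk, smul_eq_mul,
        mul_neg]
      · linear_combination p.1 * sin_sq_add_cos_sq θ
      · linear_combination p.2 * sin_sq_add_cos_sq θ

lemma frame_apply (θ : ℝ) (p : ℝ × ℝ) : frame θ p = p.1 • uvec θ + p.2 • uperp θ := rfl

lemma det_frame (θ : ℝ) : LinearMap.det (frame θ : (ℝ × ℝ) →ₗ[ℝ] ℝ × ℝ) = -1 := by
  rw [← LinearMap.det_toMatrix (Module.Basis.finTwoProd ℝ), Matrix.det_fin_two]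
  simp only [LinearMap.toMatrix_apply, Module.Basis.finTwoProd_zero, Module.Basis.finTwoProd_one,
    Module.Basis.coe_finTwoProd_repr, LinearEquiv.coe_coe, frame_apply, uvec, uperp, one_smul,
    zero_smul, add_zero, zero_add, Matrix.cons_val_zero, Matrix.cons_val_one,
    Matrix.cons_val_fin_one, mul_neg]
  linear_combination -sin_sq_add_cos_sq θ

lemma integral_comp_frame {E : Type*} [NormedAddCommGroup E] [NormedSpace ℝ E] (θ : ℝ)
    (g : ℝ × ℝ → E) : ∫ p, g (frame θ p) = ∫ v, g v :=
  (LinearEquiv.measurePreserving_of_abs_det_eq_one volume (frame θ)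
    (by rw [det_frame, abs_neg, abs_one])).integral_comp
    (frame θ).toContinuousLinearEquiv.toHomeomorph.measurableEmbedding g

lemma dot2_uperp_frame (θ : ℝ) (p : ℝ × ℝ) : dot2 (uperp θ) (frame θ p) = p.2 := by
  simp only [frame_apply, dot2, uvec, uperp, Prod.fst_add, Prod.snd_add, Prod.smul_fst,
    Prod.smul_snd, smul_eq_mul]
  linear_combination p.2 * sin_sq_add_cos_sq θ

lemma norm2_sub_frame_sq (θ : ℝ) (w p : ℝ × ℝ) :
    norm2 (w - frame θ p) ^ 2 = (p.1 - dot2 (uvec θ) w) ^ 2 + (p.2 - dot2 (uperp θ) w) ^ 2 := by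
  simp only [norm2_sq, frame_apply, dot2, uvec, uperp, Prod.fst_sub, Prod.snd_sub, Prod.fst_add,
    Prod.snd_add, Prod.smul_fst, Prod.smul_snd, smul_eq_mul]
  linear_combination (p.1 ^ 2 + p.2 ^ 2 - w.1 ^ 2 - w.2 ^ 2) * sin_sq_add_cos_sq θ

lemma norm2_frame_sq (θ : ℝ) (p : ℝ × ℝ) : norm2 (frame θ p) ^ 2 = p.1 ^ 2 + p.2 ^ 2 := by
  simp only [norm2_sq, frame_apply, uvec, uperp, Prod.fst_add, Prod.snd_add, Prod.smul_fst,
    Prod.smul_snd, smul_eq_mul]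
  linear_combination (p.1 ^ 2 + p.2 ^ 2) * sin_sq_add_cos_sq θ

end Frame

section GaussianIntegrals

lemma integral_exp_neg_mul_sub_sq (b c : ℝ) : ∫ x, rexp (-b * (x - c) ^ 2) = √(π / b) := by
  rw [integral_sub_right_eq_self (fun x => rexp (-b * x ^ 2)) c, integral_gaussian]

variable {r : ℝ}

lemma integral_exp_sub_sq_div (hr : 0 < r) (c : ℝ) :
    ∫ x, rexp (-(x - c) ^ 2 / (2 * r ^ 2)) = √(2 * π) * r := by
  have hexp (x : ℝ) :
      rexp (-(x - c) ^ 2 / (2 * r ^ 2)) = rexp (-(1 / (2 * r ^ 2)) * (x - c) ^ 2) := by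
    congr 1; ring
  have hb : π / (1 / (2 * r ^ 2)) = 2 * π * r ^ 2 := by field_simp
  simp_rw [hexp]
  rw [integral_exp_neg_mul_sub_sq, hb, sqrt_mul (by positivity), sqrt_sq hr.le]

/-- Completing the square: the two Gaussians multiply to one centred at `b / 2`. -/
lemma integral_exp_sub_sq_mul_exp_sq (hr : 0 < r) (b : ℝ) :
    ∫ t, rexp (-(t - b) ^ 2 / (2 * r ^ 2)) * rexp (-t ^ 2 / (2 * r ^ 2))
      = √π * r * rexp (-b ^ 2 / (4 * r ^ 2)) := by
  have hsq (t : ℝ) : rexp (-(t - b) ^ 2 / (2 * r ^ 2)) * rexp (-t ^ 2 / (2 * r ^ 2))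
      = rexp (-b ^ 2 / (4 * r ^ 2)) * rexp (-(1 / r ^ 2) * (t - b / 2) ^ 2) := by
    rw [← exp_add, ← exp_add]; congr 1; field_simp; ring
  have hb : π / (1 / r ^ 2) = π * r ^ 2 := by field_simp
  simp_rw [hsq]
  rw [integral_const_mul, integral_exp_neg_mul_sub_sq, hb, sqrt_mul pi_pos.le, sqrt_sq hr.le]
  ring

end GaussianIntegrals

section Gaussian

variable {r : ℝ}

def gaussConst (r : ℝ) : ℝ := √(2 * r * √π) / (2 * π * r ^ 2)

lemma gauss_apply (r : ℝ) (w : ℝ × ℝ) :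
    gauss r w = gaussConst r * rexp (-norm2 w ^ 2 / (2 * r ^ 2)) := rfl

-- The left side is `‖L_θ[gauss r]‖₂²`, computed from `lineProj_gauss`.
lemma gaussConst_sq_mul (hr : 0 < r) : gaussConst r ^ 2 * (2 * π * r ^ 2) * (√π * r) = 1 := by
  rw [gaussConst, div_pow, sq_sqrt (by positivity)]
  field_simp
  exact sq_sqrt pi_pos.le

lemma lineProj_gauss (hr : 0 < r) (θ t : ℝ) :
    lineProj (gauss r) θ t = gaussConst r * (√(2 * π) * r) * rexp (-t ^ 2 / (2 * r ^ 2)) := by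
  have hsplit (s : ℝ) : gauss r (s • uvec θ + t • uperp θ)
      = gaussConst r * rexp (-t ^ 2 / (2 * r ^ 2)) * rexp (-s ^ 2 / (2 * r ^ 2)) := by
    rw [← frame_apply θ (s, t), gauss_apply, norm2_frame_sq, mul_assoc, ← exp_add]
    congr 2; ring
  have hintegral := integral_exp_sub_sq_div hr 0
  simp only [sub_zero] at hintegral
  simp_rw [lineProj, hsplit]
  rw [integral_const_mul, hintegral]
  ring

lemma integral_gauss_sub_mul_lineProj (hr : 0 < r) (θ : ℝ) (w : ℝ × ℝ) :
    ∫ v, gauss r (w - v) * lineProj (gauss r) θ (dot2 (uperp θ) v)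
      = rexp (-dot2 (uperp θ) w ^ 2 / (4 * r ^ 2)) := by
  set a := dot2 (uvec θ) w
  set b := dot2 (uperp θ) w
  set f := fun s => gaussConst r * rexp (-(s - a) ^ 2 / (2 * r ^ 2))
  set g := fun t => gaussConst r * (√(2 * π) * r) *
    (rexp (-(t - b) ^ 2 / (2 * r ^ 2)) * rexp (-t ^ 2 / (2 * r ^ 2)))
  have hfactor (p : ℝ × ℝ) :
      gauss r (w - frame θ p) * lineProj (gauss r) θ (dot2 (uperp θ) (frame θ p))
        = f p.1 * g p.2 := by
    have hexp : rexp (-((p.1 - a) ^ 2 + (p.2 - b) ^ 2) / (2 * r ^ 2))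
        = rexp (-(p.1 - a) ^ 2 / (2 * r ^ 2)) * rexp (-(p.2 - b) ^ 2 / (2 * r ^ 2)) := by
      rw [← exp_add]; congr 1; ring
    rw [gauss_apply, norm2_sub_frame_sq, hexp, dot2_uperp_frame, lineProj_gauss hr]
    ring
  rw [← integral_comp_frame θ]
  simp_rw [hfactor]
  rw [Measure.volume_eq_prod, integral_prod_mul f g]
  simp only [f, g]
  rw [integral_const_mul, integral_const_mul, integral_exp_sub_sq_div hr,
    integral_exp_sub_sq_mul_exp_sq hr]
  have h2π : √(2 * π) ^ 2 = 2 * π := sq_sqrt (by positivity)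
  linear_combination (gaussConst r ^ 2 * r ^ 2 * (√π * r) * rexp (-b ^ 2 / (4 * r ^ 2))) * h2π
    + rexp (-b ^ 2 / (4 * r ^ 2)) * gaussConst_sq_mul hr

end Gaussian

section Periodicity

variable {F : Type*} [NormedAddCommGroup F] [NormedSpace ℝ F]

lemma integral_comp_uperp (k : ℝ × ℝ → F) :
    ∫ θ in 0..2 * π, k (uperp θ) = ∫ θ in -π..π, k (uvec θ) := by
  simp_rw [uperp_eq_uvec_sub]
  rw [intervalIntegral.integral_comp_sub_right (fun θ => k (uvec θ))]
  have hper := (uvec_periodic.comp k).intervalIntegral_add_eq (-(π / 2)) (-π)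
  simp only [Function.comp_apply] at hper
  convert hper using 2 <;> ring

lemma integral_comp_neg_uvec (k : ℝ × ℝ → F) :
    ∫ θ in -π..π, k (-uvec θ) = ∫ θ in -π..π, k (uvec θ) := by
  simp_rw [← uvec_add_pi]
  rw [intervalIntegral.integral_comp_add_right (fun θ => k (uvec θ))]
  have hper := (uvec_periodic.comp k).intervalIntegral_add_eq 0 (-π)
  simp only [Function.comp_apply] at hper
  convert hper using 2 <;> ring

end Periodicity

section RadialFourier

variable {E : Type*} [NormedAddCommGroup E] [NormedSpace ℂ E] {φ : ℝ → E}

def fourierInvIoi (φ : ℝ → E) (t : ℝ) : E := ∫ σ in Ioi 0, 𝐞 (t * σ) • φ σ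

lemma continuous_fourierInvIoi (hφ : Integrable φ) : Continuous (fourierInvIoi φ) := by
  refine continuous_of_dominated (bound := fun σ => ‖φ σ‖) (fun t => ?_) (fun t => ?_)
    hφ.norm.integrableOn (ae_of_all _ fun σ => ?_)
  · exact (continuous_fourierChar.comp (continuous_const.mul continuous_id)).aestronglyMeasurable
      |>.smul hφ.aestronglyMeasurable.restrict
  · exact ae_of_all _ fun σ => by rw [Circle.norm_smul]
  · exact (continuous_fourierChar.comp (continuous_id.mul continuous_const)).smul continuous_const

lemma fourierInvIoi_add_neg (hφ : Integrable φ) (heven : Function.Even φ) (t : ℝ) :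
    fourierInvIoi φ t + fourierInvIoi φ (-t) = 𝓕⁻ φ t := by
  set f : ℝ → E := fun σ => 𝐞 (t * σ) • φ σ
  have hf : Integrable f := hφ.circle_smul
    (continuous_fourierChar.comp (continuous_const.mul continuous_id)).aestronglyMeasurable
  have hneg : fourierInvIoi φ (-t) = ∫ σ in Iic 0, f σ := by
    rw [fourierInvIoi, ← neg_zero, ← integral_comp_neg_Ioi]
    simp [f, heven _]
  rw [hneg, add_comm, fourierInvIoi,
    intervalIntegral.integral_Iic_add_Ioi hf.integrableOn hf.integrableOn, Real.fourierInv_eq]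
  simp [f]

lemma integral_radial_eq_integral_fourierInvIoi (hφ : Integrable φ) (w : ℝ × ℝ) :
    ∫ ξ, 𝐞 (dot2 ξ w) • (norm2 ξ)⁻¹ • φ (norm2 ξ)
      = ∫ θ in -π..π, fourierInvIoi φ (dot2 (uvec θ) w) := by
  set G : ℝ × ℝ → E := fun p => 𝐞 (dot2 (uvec p.2) w * p.1) • φ p.1
  have hpolar :
      ∫ ξ, 𝐞 (dot2 ξ w) • (norm2 ξ)⁻¹ • φ (norm2 ξ) = ∫ p in polarCoord.target, G p := by
    rw [← integral_comp_polarCoord_symm]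
    refine setIntegral_congr_fun polarCoord.open_target.measurableSet fun p hp => ?_
    have hσ : 0 < p.1 := (polarCoord_target ▸ hp).1
    rw [polarCoord_symm_eq_smul_uvec, norm2_smul_uvec, dot2_smul_uvec, abs_of_pos hσ,
      smul_comm, smul_inv_smul₀ hσ.ne']
  have hG : Integrable G ((volume.restrict (Ioi 0)).prod (volume.restrict (Ioo (-π) π))) := by
    refine (hφ.integrableOn.comp_fst _).circle_smul ?_
    exact (continuous_fourierChar.comp (by unfold dot2 uvec; fun_prop)).aestronglyMeasurable
  rw [hpolar, polarCoord_target, Measure.volume_eq_prod, ← Measure.prod_restrict,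
    integral_prod_symm G hG, intervalIntegral.integral_of_le (by linarith [pi_pos]),
    integral_Ioc_eq_integral_Ioo]
  rfl

theorem integral_radial_eq_half_integral_fourierInv (hφ : Integrable φ) (heven : Function.Even φ)
    (w : ℝ × ℝ) :
    ∫ ξ, 𝐞 (dot2 ξ w) • (norm2 ξ)⁻¹ • φ (norm2 ξ)
      = (1 / 2 : ℝ) • ∫ θ in -π..π, 𝓕⁻ φ (dot2 (uvec θ) w) := by
  have hcont : Continuous fun θ => fourierInvIoi φ (dot2 (uvec θ) w) :=
    (continuous_fourierInvIoi hφ).comp (by unfold dot2 uvec; fun_prop)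
  have hcont_neg : Continuous fun θ => fourierInvIoi φ (-dot2 (uvec θ) w) :=
    (continuous_fourierInvIoi hφ).comp (by unfold dot2 uvec; fun_prop)
  have hsymm := integral_comp_neg_uvec fun u => fourierInvIoi φ (dot2 u w)
  simp only [dot2_neg_left] at hsymm
  simp_rw [← fourierInvIoi_add_neg hφ heven]
  rw [intervalIntegral.integral_add (hcont.intervalIntegrable _ _)
    (hcont_neg.intervalIntegrable _ _), hsymm,
    integral_radial_eq_integral_fourierInvIoi hφ, ← two_smul ℝ, smul_smul]
  norm_num

end RadialFourier

section GaussianProfile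

variable {r : ℝ}

def gaussProfile (r σ : ℝ) : ℝ := 2 * r / √π * rexp (-(4 * π ^ 2 * r ^ 2 * σ ^ 2))

lemma integrable_gaussProfile (hr : 0 < r) : Integrable fun σ => (gaussProfile r σ : ℂ) := by
  have hgauss := (integrable_exp_neg_mul_sq (by positivity : 0 < 4 * π ^ 2 * r ^ 2)).const_mul
    (2 * r / √π)
  simp only [neg_mul] at hgauss
  exact hgauss.ofReal

lemma even_gaussProfile (r : ℝ) : Function.Even fun σ => (gaussProfile r σ : ℂ) := fun σ => by
  simp only [gaussProfile, neg_sq]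

lemma fourierInv_gaussProfile (hr : 0 < r) (t : ℝ) :
    𝓕⁻ (fun σ => (gaussProfile r σ : ℂ)) t
      = ((rexp (-t ^ 2 / (4 * r ^ 2)) / π : ℝ) : ℂ) := by
  set b : ℝ := 4 * π * r ^ 2
  have hb : 0 < (b : ℂ).re := by rw [Complex.ofReal_re]; positivity
  have hprofile : (fun σ => (gaussProfile r σ : ℂ))
      = fun σ : ℝ => ((2 * r / √π : ℝ) : ℂ) * Complex.exp (-π * b * σ ^ 2) := by
    ext σ; push_cast [gaussProfile, b]; ring_nf
  have hsqrt : (b : ℂ) ^ (1 / 2 : ℂ) = ((2 * √π * r : ℝ) : ℂ) := by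
    have hb_sq : b = (2 * √π * r) ^ 2 := by rw [mul_pow, mul_pow, sq_sqrt pi_pos.le]; ring
    rw [show (1 / 2 : ℂ) = ((1 / 2 : ℝ) : ℂ) by push_cast; rfl,
      ← Complex.ofReal_cpow (by positivity), ← sqrt_eq_rpow, hb_sq, sqrt_sq (by positivity)]
  rw [hprofile, fourierInv_const_mul, Real.fourierInv_eq_fourier_neg, fourier_gaussian_pi hb, hsqrt]
  have hexp : -(π : ℂ) / b * (-t : ℂ) ^ 2 = -t ^ 2 / (4 * r ^ 2) := by
    push_cast [b]; field_simp
  have hr' : (r : ℂ) ≠ 0 := by exact_mod_cast hr.ne'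
  push_cast
  rw [hexp]
  field_simp
  rw [← Complex.ofReal_pow, sq_sqrt pi_pos.le]

end GaussianProfile

/-- inverse Fourier representation of the averaged project-then-backproject
kernel, whose Fourier multiplier is `(2r/(√π‖ξ‖))·exp(−4π²r²‖ξ‖²)`. -/
theorem avgKernel_fourier_repr (r : ℝ) (hr : 0 < r) (w : ℝ × ℝ) :
    (avgKernel r w : ℂ) =
      ∫ ξ : ℝ × ℝ, Complex.exp ((2 * Real.pi * dot2 ξ w : ℝ) * Complex.I) *
        ((2 * r / (Real.sqrt Real.pi * norm2 ξ)) *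
          Real.exp (-(4 * Real.pi ^ 2 * r ^ 2 * (norm2 ξ) ^ 2)) : ℝ) := by
  have hintegrand (ξ : ℝ × ℝ) :
      𝐞 (dot2 ξ w) • (norm2 ξ)⁻¹ • (gaussProfile r (norm2 ξ) : ℂ)
        = Complex.exp ((2 * π * dot2 ξ w : ℝ) * Complex.I) *
          ((2 * r / (√π * norm2 ξ)) * rexp (-(4 * π ^ 2 * r ^ 2 * (norm2 ξ) ^ 2)) : ℝ) := by
    rw [Circle.smul_def, Real.fourierChar_apply, Complex.real_smul, smul_eq_mul, gaussProfile]
    push_cast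
    ring
  calc (avgKernel r w : ℂ)
      = ((1 / (2 * π) * ∫ θ in -π..π, rexp (-dot2 (uvec θ) w ^ 2 / (4 * r ^ 2)) : ℝ) : ℂ) := by
        rw [avgKernel]
        simp_rw [integral_gauss_sub_mul_lineProj hr]
        rw [integral_comp_uperp fun u => rexp (-dot2 u w ^ 2 / (4 * r ^ 2))]
    _ = (1 / 2 : ℝ) • ∫ θ in -π..π, 𝓕⁻ (fun σ => (gaussProfile r σ : ℂ)) (dot2 (uvec θ) w) := by
        simp_rw [fourierInv_gaussProfile hr, intervalIntegral.integral_ofReal,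
          intervalIntegral.integral_div, Complex.real_smul]
        push_cast
        ring
    _ = _ := by
        rw [← integral_radial_eq_half_integral_fourierInv (integrable_gaussProfile hr)
          (even_gaussProfile r) w]
        simp_rw [hintegrand]
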